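/- arXiv:1303.5591 — 5 statements merged into one kernel-verified Lean document; each statement's English description precedes it below -/
import Mathlib

section
/- Let X and Y be finite sets, let S_X be a nonempty compact convex set of probability distributions on X, and let S_Y be a nonempty compact convex set of probability distributions on Y. Let p be a joint probability distribution on X × Y such that the marginal distribution (p(x))_{x∈X} belongs to S_X and, for every x ∈ X with p(x) > 0, the conditional distribution (p(y|x))_{y∈Y} belongs to S_Y. Then p lies in the convex hull of the set of joint distributions of the form q(x,y) = r(x)·f_x(y), where r is an extreme point of S_X and, for each x ∈ X, f_x is an extreme point of S_Y. -/
/-!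
Write `p = m ⊗ c` with `m` its marginal and `c x` its conditional at `x` (any point of `S_Y` where
`m x = 0`). Minkowski's theorem puts `m` in the convex hull of the extreme points of `S_X` and each
`c x` in that of `S_Y`, and since `(r, f) ↦ r ⊗ f` is bilinear it maps such a pair into the convex
hull of the products `r ⊗ f` of extreme points.

Minkowski's theorem goes by induction on the dimension of the affine span: a non-extreme point lies
on a chord whose endpoints are relative boundary points, and a supporting hyperplane at each
endpoint cuts out a lower-dimensional exposed face whose extreme points are extreme in the set.
-/

open Set Module Filter Topology Pointwise

section Minkowski

variable {E : Type*} [NormedAddCommGroup E] [NormedSpace ℝ E] {s : Set E}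

theorem IsCompact.exists_add_smul_mem_forall_add_smul_notMem (hs : IsCompact s) {x d : E}
    (hx : x ∈ s) (hd : d ≠ 0) :
    ∃ β : ℝ, 0 ≤ β ∧ x + β • d ∈ s ∧ ∀ ε : ℝ, 0 < ε → x + β • d + ε • d ∉ s := by
  set I := (fun t : ℝ => x + t • d) ⁻¹' s
  have hI : IsCompact I :=
    ((Homeomorph.addLeft x).isClosedEmbedding.comp
      (isClosedEmbedding_smul_left hd)).isCompact_preimage hs
  have h0 : (0 : ℝ) ∈ I := by simpa [I] using hx
  refine ⟨sSup I, le_csSup hI.bddAbove h0, hI.sSup_mem ⟨0, h0⟩, fun ε hε hmem => ?_⟩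
  have : sSup I + ε ∈ I := by simpa [I, add_smul, add_assoc] using hmem
  linarith [le_csSup hI.bddAbove this]

variable [FiniteDimensional ℝ E]

/-- Thickening `s` by a complement `W` of its direction gives a convex body with nonempty interior
that meets the line `b + ℝ d` only where `s` does, so Hahn–Banach applies at `b`. -/
theorem Convex.exists_le_lt_of_add_smul_notMem (hs : Convex ℝ s) {b d : E} (hb : b ∈ s)
    (hd : d ∈ vectorSpan ℝ s) (hout : ∀ ε : ℝ, 0 < ε → b + ε • d ∉ s) :
    ∃ l : StrongDual ℝ E, (∀ z ∈ s, l z ≤ l b) ∧ ∃ z ∈ s, l z < l b := by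
  obtain ⟨W, hVW⟩ := Submodule.exists_isCompl (vectorSpan ℝ s)
  set t := s + (W : Set E)
  have hst : s ⊆ t := fun z hz => ⟨z, hz, 0, W.zero_mem, add_zero z⟩
  have ht : Convex ℝ t := hs.add W.convex
  have hint : (interior t).Nonempty := by
    rw [ht.interior_nonempty_iff_affineSpan_eq_top,
      AffineSubspace.affineSpan_eq_top_iff_vectorSpan_eq_top_of_nonempty ℝ E E ⟨b, hst hb⟩,
      eq_top_iff, ← hVW.sup_eq_top]
    refine sup_le (vectorSpan_mono ℝ hst) fun w hw => ?_
    simpa using vsub_mem_vectorSpan ℝ (add_mem_add hb hw : b + w ∈ t) (hst hb)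
  have hb_int : b ∉ interior t := by
    intro hbt
    have hlim : Tendsto (fun ε : ℝ => b + ε • d) (𝓝[>] 0) (𝓝 b) := by
      refine tendsto_nhdsWithin_of_tendsto_nhds ?_
      simpa using ((continuous_id.smul continuous_const).const_add b).tendsto (0 : ℝ)
    obtain ⟨ε, hεt, hε⟩ :=
      ((hlim.eventually (isOpen_interior.mem_nhds hbt)).and self_mem_nhdsWithin).exists
    obtain ⟨z, hz, w, hw, hzw⟩ := mem_add.1 (interior_subset hεt)
    have hwV : w ∈ vectorSpan ℝ s := by
      have : w = (b - z) + ε • d := by rw [← add_sub_cancel_left z w, hzw]; abel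
      exact this ▸ add_mem (vsub_mem_vectorSpan ℝ hb hz) (Submodule.smul_mem _ ε hd)
    have hw0 : w = 0 := Submodule.disjoint_def.1 hVW.disjoint w hwV hw
    exact hout ε hε (by rw [← hzw, hw0, add_zero]; exact hz)
  obtain ⟨l, hl⟩ := geometric_hahn_banach_open_point ht.interior isOpen_interior hb_int
  have hle : ∀ z ∈ t, l z ≤ l b := by
    refine fun z hz => closure_minimal (fun y hy => (hl y hy).le) (isClosed_le l.continuous
      continuous_const) ?_
    rw [ht.closure_interior_eq_closure_of_nonempty_interior hint]
    exact subset_closure hz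
  have hW : ∀ w ∈ W, l w = 0 := by
    intro w hw
    have := hle (b + l w • w) ⟨b, hb, l w • w, W.smul_mem _ hw, rfl⟩
    rw [map_add, map_smul, smul_eq_mul] at this
    nlinarith [sq_nonneg (l w)]
  obtain ⟨_, hy⟩ := hint
  obtain ⟨z, hz, w, hw, rfl⟩ := mem_add.1 (interior_subset hy)
  refine ⟨l, fun z hz => hle z (hst hz), z, hz, ?_⟩
  simpa [hW w hw] using hl _ hy

theorem ContinuousLinearMap.finrank_vectorSpan_toExposed_lt (l : StrongDual ℝ E) {b z : E}
    (hb : b ∈ l.toExposed s) (hz : z ∈ s) (hlt : l z < l b) :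
    finrank ℝ (vectorSpan ℝ (l.toExposed s)) < finrank ℝ (vectorSpan ℝ s) := by
  have hker : vectorSpan ℝ (l.toExposed s) ≤ LinearMap.ker (l : E →ₗ[ℝ] ℝ) := by
    refine Submodule.span_le.2 ?_
    rintro _ ⟨u, hu, v, hv, rfl⟩
    have := hu.2 v hv.1
    have := hv.2 u hu.1
    simp only [SetLike.mem_coe, LinearMap.mem_ker, ContinuousLinearMap.coe_coe, vsub_eq_sub,
      map_sub]
    linarith
  refine Submodule.finrank_lt_finrank_of_lt (lt_of_le_of_ne (vectorSpan_mono ℝ (sep_subset _ _))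
    fun h => ?_)
  have := hker (h ▸ vsub_mem_vectorSpan ℝ hb.1 hz)
  simp only [LinearMap.mem_ker, ContinuousLinearMap.coe_coe, vsub_eq_sub, map_sub] at this
  linarith

/-- Minkowski's theorem: in finite dimension, Krein–Milman holds without taking a closure. -/
theorem IsCompact.subset_convexHull_extremePoints (hcomp : IsCompact s) (hconv : Convex ℝ s) :
    s ⊆ convexHull ℝ (s.extremePoints ℝ) := by
  induction hn : finrank ℝ (vectorSpan ℝ s) using Nat.strong_induction_on generalizing s with
  | _ n ih =>
  have boundary : ∀ c ∈ s, ∀ e ∈ vectorSpan ℝ s, (∀ ε : ℝ, 0 < ε → c + ε • e ∉ s) →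
      c ∈ convexHull ℝ (s.extremePoints ℝ) := by
    intro c hc e he hout
    obtain ⟨l, hle, z, hz, hlt⟩ := hconv.exists_le_lt_of_add_smul_notMem hc he hout
    have hF : IsExposed ℝ s (l.toExposed s) := ContinuousLinearMap.toExposed.isExposed
    have hcF : c ∈ l.toExposed s := ⟨hc, hle⟩
    refine convexHull_mono hF.isExtreme.extremePoints_subset_extremePoints ?_
    exact ih _ (hn ▸ l.finrank_vectorSpan_toExposed_lt hcF hz hlt) (hF.isCompact hcomp)
      (hF.convex hconv) rfl hcF
  intro x hx
  by_cases hext : ∀ y ∈ s, y = x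
  · exact subset_convexHull ℝ _ ⟨hx, fun y hy _ _ _ => hext y hy⟩
  push Not at hext
  obtain ⟨y, hy, hyx⟩ := hext
  have hd : y - x ∈ vectorSpan ℝ s := vsub_mem_vectorSpan ℝ hy hx
  obtain ⟨β, hβ0, hβs, hβout⟩ :=
    hcomp.exists_add_smul_mem_forall_add_smul_notMem hx (sub_ne_zero.2 hyx)
  obtain ⟨α, hα0, hαs, hαout⟩ :=
    hcomp.exists_add_smul_mem_forall_add_smul_notMem hx (neg_ne_zero.2 (sub_ne_zero.2 hyx))
  have hβ1 : 1 ≤ β := not_lt.1 fun h => hβout (1 - β) (by linarith) (by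
    rwa [add_assoc, ← add_smul, add_sub_cancel, one_smul, add_sub_cancel])
  have hx_seg : x ∈ segment ℝ (x + α • -(y - x)) (x + β • (y - x)) := by
    have hαβ : 0 < α + β := by linarith
    refine ⟨β / (α + β), α / (α + β), by positivity, by positivity, by field_simp; ring, ?_⟩
    match_scalars <;> field_simp <;> ring
  exact (convex_convexHull ℝ _).segment_subset (boundary _ hαs _ (neg_mem hd) hαout)
    (boundary _ hβs _ hd hβout) hx_seg

end Minkowski

theorem LinearMap.map₂_mem_convexHull_image2 {𝕜 E F G : Type*} [Field 𝕜] [LinearOrder 𝕜]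
    [IsStrictOrderedRing 𝕜] [AddCommGroup E] [Module 𝕜 E] [AddCommGroup F] [Module 𝕜 F]
    [AddCommGroup G] [Module 𝕜 G] (B : E →ₗ[𝕜] F →ₗ[𝕜] G) {s : Set E} {t : Set F} {x : E} {y : F}
    (hx : x ∈ convexHull 𝕜 s) (hy : y ∈ convexHull 𝕜 t) :
    B x y ∈ convexHull 𝕜 (image2 (fun a b => B a b) s t) := by
  have hleft : ∀ a ∈ s, B a y ∈ convexHull 𝕜 (image2 (fun a b => B a b) s t) := by
    intro a ha
    have := mem_image_of_mem (B a) hy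
    rw [LinearMap.image_convexHull] at this
    refine convexHull_mono ?_ this
    rintro _ ⟨b, hb, rfl⟩
    exact mem_image2_of_mem ha hb
  have := mem_image_of_mem (B.flip y) hx
  rw [LinearMap.image_convexHull] at this
  exact convexHull_min (image_subset_iff.2 hleft) (convex_convexHull 𝕜 _) this

section CompProd

variable (R : Type*) {X Y : Type*} [CommSemiring R]

/-- The joint law `r ⊗ f` of a marginal `r` and a kernel `f`. -/
def compProdₗ : (X → R) →ₗ[R] (X → Y → R) →ₗ[R] (X × Y → R) :=
  LinearMap.mk₂ R (fun r f z => r z.1 * f z.1 z.2)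
    (fun _ _ _ => funext fun _ => add_mul _ _ _)
    (fun _ _ _ => funext fun _ => mul_assoc _ _ _)
    (fun _ _ _ => funext fun _ => mul_add _ _ _)
    (fun _ _ _ => funext fun _ => mul_left_comm _ _ _)

@[simp]
theorem compProdₗ_apply (r : X → R) (f : X → Y → R) (z : X × Y) :
    compProdₗ R r f z = r z.1 * f z.1 z.2 := rfl

end CompProd

theorem eq_compProdₗ_of_cond {X Y : Type*} [Fintype Y] {p : X × Y → ℝ} (hp : ∀ z, 0 ≤ p z)
    {c : X → Y → ℝ} (hc : ∀ x, 0 < ∑ y, p (x, y) → c x = fun y => p (x, y) / ∑ y', p (x, y')) :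
    p = compProdₗ ℝ (fun x => ∑ y, p (x, y)) c := by
  funext ⟨x, y⟩
  rcases (Finset.sum_nonneg fun y _ => hp (x, y)).eq_or_lt with h | h
  · have := (Finset.sum_eq_zero_iff_of_nonneg fun y _ => hp (x, y)).1 h.symm y (Finset.mem_univ y)
    simp [this, ← h]
  · simp [hc x h, mul_div_cancel₀ _ h.ne']

theorem sv_joint_convex_decomposition_general
    {X Y : Type*} [Fintype X] [Fintype Y]
    (SX : Set (X → ℝ)) (SY : Set (Y → ℝ))
    (hSXconv : Convex ℝ SX) (hSXcomp : IsCompact SX)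
    (hSYne : SY.Nonempty) (hSYconv : Convex ℝ SY) (hSYcomp : IsCompact SY)
    (p : X × Y → ℝ) (hp0 : ∀ z, 0 ≤ p z)
    (hmarg : (fun x => ∑ y, p (x, y)) ∈ SX)
    (hcond : ∀ x, 0 < ∑ y, p (x, y) →
      (fun y => p (x, y) / ∑ y', p (x, y')) ∈ SY) :
    p ∈ convexHull ℝ {q : X × Y → ℝ |
      ∃ r ∈ Set.extremePoints ℝ SX, ∃ f : X → (Y → ℝ),
        (∀ x, f x ∈ Set.extremePoints ℝ SY) ∧ ∀ x y, q (x, y) = r x * f x y} := by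
  obtain ⟨g, hg⟩ := hSYne
  have hkernel : ∀ x, ∃ f ∈ SY, 0 < ∑ y, p (x, y) → f = fun y => p (x, y) / ∑ y', p (x, y') := by
    intro x
    by_cases h : 0 < ∑ y, p (x, y)
    · exact ⟨_, hcond x h, fun _ => rfl⟩
    · exact ⟨g, hg, fun h' => absurd h' h⟩
  choose c hcSY hc using hkernel
  rw [eq_compProdₗ_of_cond hp0 hc]
  refine convexHull_mono ?_ ((compProdₗ ℝ).map₂_mem_convexHull_image2
    (hSXcomp.subset_convexHull_extremePoints hSXconv hmarg)
    (mem_convexHull_pi (s := univ) fun x _ =>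
      hSYcomp.subset_convexHull_extremePoints hSYconv (hcSY x)))
  rintro _ ⟨r, hr, f, hf, rfl⟩
  exact ⟨r, hr, f, fun x => hf x (mem_univ x), fun x y => rfl⟩

/-- If the marginal of a joint distribution `p` on `X × Y` lies in a
nonempty compact convex set `SX` of distributions on `X`, and all conditionals
(on points of positive marginal) lie in a nonempty compact convex set `SY` of
distributions on `Y`, then `p` lies in the convex hull of the products of an
extreme point `r` of `SX` with extreme points `f x` of `SY`. -/
theorem sv_joint_convex_decomposition
    {X Y : Type*} [Fintype X] [Fintype Y]
    (SX : Set (X → ℝ)) (SY : Set (Y → ℝ))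
    (hSXprob : ∀ q ∈ SX, (∀ x, 0 ≤ q x) ∧ ∑ x, q x = 1)
    (hSYprob : ∀ q ∈ SY, (∀ y, 0 ≤ q y) ∧ ∑ y, q y = 1)
    (hSXne : SX.Nonempty) (hSXconv : Convex ℝ SX) (hSXcomp : IsCompact SX)
    (hSYne : SY.Nonempty) (hSYconv : Convex ℝ SY) (hSYcomp : IsCompact SY)
    (p : X × Y → ℝ) (hp0 : ∀ z, 0 ≤ p z) (hp1 : ∑ z, p z = 1)
    (hmarg : (fun x => ∑ y, p (x, y)) ∈ SX)
    (hcond : ∀ x, 0 < ∑ y, p (x, y) →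
      (fun y => p (x, y) / ∑ y', p (x, y')) ∈ SY) :
    p ∈ convexHull ℝ {q : X × Y → ℝ |
      ∃ r ∈ Set.extremePoints ℝ SX, ∃ f : X → (Y → ℝ),
        (∀ x, f x ∈ Set.extremePoints ℝ SY) ∧ ∀ x y, q (x, y) = r x * f x y} :=
  sv_joint_convex_decomposition_general SX SY hSXconv hSXcomp hSYne hSYconv hSYcomp p hp0 hmarg
    hcond
end

section
/- Fix n ∈ ℕ and ε ∈ [0, 1/2]. Every extreme point P of the set of probability distributions on {0,1}^n satisfying the Santha–Vazirani condition with parameter ε is a permutation of the Bernoulli distribution with parameter p₊ = 1/2 + ε; that is, there exists a permutation σ of {0,1}^n such that P(x) = B(σ(x)) for all x ∈ {0,1}^n, where B(x) = (1/2+ε)^{n−w(x)} (1/2−ε)^{w(x)} and w(x) denotes the Hamming weight of x. -/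
open Finset

/-- Hamming weight of a binary string. -/
def hammingWeight {n : ℕ} (x : Fin n → Bool) : ℕ :=
  (Finset.univ.filter (fun j => x j = true)).card

/-- The Bernoulli distribution with parameter `p₊ = 1/2 + ε` on `{0,1}^n`:
`B(x) = (1/2+ε)^(n−w(x)) (1/2−ε)^(w(x))`. -/
noncomputable def bern (n : ℕ) (ε : ℝ) (x : Fin n → Bool) : ℝ :=
  (1/2 + ε) ^ (n - hammingWeight x) * (1/2 - ε) ^ (hammingWeight x)

/-- Marginal probability of a prefix `y` of length `i` under `P`. -/
noncomputable def prefMarg {n : ℕ} (P : (Fin n → Bool) → ℝ) {i : ℕ} (h : i ≤ n)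
    (y : Fin i → Bool) : ℝ :=
  ∑ x ∈ Finset.univ.filter
      (fun x : Fin n → Bool => ∀ j : Fin i, x (Fin.castLE h j) = y j), P x

/-- `P` is a probability distribution on `{0,1}^n` satisfying the Santha–Vazirani
condition with parameter `ε`: every conditional probability of the next bit given
a prefix of positive probability lies in `[1/2−ε, 1/2+ε]`. -/
noncomputable def IsSV (n : ℕ) (ε : ℝ) (P : (Fin n → Bool) → ℝ) : Prop :=
  (∀ x, 0 ≤ P x) ∧ (∑ x, P x = 1) ∧
  ∀ (i : ℕ) (hi : i < n) (y : Fin i → Bool),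
    0 < prefMarg P hi.le y → ∀ b : Bool,
      1/2 - ε ≤ prefMarg P hi (Fin.snoc y b) / prefMarg P hi.le y ∧
      prefMarg P hi (Fin.snoc y b) / prefMarg P hi.le y ≤ 1/2 + ε

/-- The set of SV distributions with parameter `ε` on `{0,1}^n`. -/
noncomputable def SVset (n : ℕ) (ε : ℝ) : Set ((Fin n → Bool) → ℝ) :=
  {P | IsSV n ε P}

/-- The `K`-th Ky Fan norm of `Q` : the sum of the `K` largest values of `Q`
(with multiplicity), i.e. the maximal sum of `Q` over subsets of cardinality `K`. -/
noncomputable def kyFan {Z : Type*} [Fintype Z] (K : ℕ) (Q : Z → ℝ) : ℝ :=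
  sSup ((fun S : Finset Z => ∑ z ∈ S, Q z) '' {S : Finset Z | S.card = K})

/-!
An SV distribution `P` on `n + 1` bits is the same thing as a law `p` of the first bit with
values in `[1/2 - ε, 1/2 + ε]` together with, for each value of the first bit, an SV distribution
of the remaining bits (`glue`). Moving `p` inside its interval, or moving the conditional law of a
branch of positive weight inside the SV set, moves `P` along an injective affine map that stays in
the SV set. Hence at an extreme point `p` is an endpoint of the interval, i.e. a permuted
one-bit Bernoulli law, and the conditionals are extreme. By induction on `n` the conditionals are
permuted Bernoulli distributions, and these permutations assemble into one of `{0,1}^(n+1)`.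
-/

theorem AffineMap.mem_extremePoints_of_mapsTo {𝕜 E F : Type*} [Ring 𝕜] [PartialOrder 𝕜]
    [IsOrderedRing 𝕜] [AddCommGroup E] [Module 𝕜 E] [AddCommGroup F] [Module 𝕜 F]
    {f : E →ᵃ[𝕜] F} (hf : Function.Injective f) {s : Set E} {t : Set F} (hst : Set.MapsTo f s t)
    {x : E} (hx : x ∈ s) (hfx : f x ∈ t.extremePoints 𝕜) : x ∈ s.extremePoints 𝕜 := by
  refine mem_extremePoints.2 ⟨hx, fun x₁ hx₁ x₂ hx₂ hxs => ?_⟩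
  have hfxs : f x ∈ openSegment 𝕜 (f x₁) (f x₂) := image_openSegment 𝕜 f x₁ x₂ ▸ ⟨x, hxs, rfl⟩
  obtain ⟨h₁, h₂⟩ := (mem_extremePoints.1 hfx).2 _ (hst hx₁) _ (hst hx₂) hfxs
  exact ⟨hf h₁, hf h₂⟩

theorem sum_univ_fin_cons {n : ℕ} {α M : Type*} [Fintype α] [AddCommMonoid M]
    (g : (Fin (n + 1) → α) → M) : ∑ x, g x = ∑ a, ∑ x : Fin n → α, g (Fin.cons a x) := by
  rw [← (Fin.consEquiv fun _ => α).sum_comp, Fintype.sum_prod_type]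
  rfl

theorem prefMarg_zero {n : ℕ} (P : (Fin n → Bool) → ℝ) (h : 0 ≤ n) (y : Fin 0 → Bool) :
    prefMarg P h y = ∑ x, P x := by
  simp [prefMarg]

theorem prefMarg_cons {n i : ℕ} {P : (Fin (n + 1) → Bool) → ℝ} (h : i + 1 ≤ n + 1) (b : Bool)
    (y : Fin i → Bool) :
    prefMarg P h (Fin.cons b y) =
      prefMarg (fun x => P (Fin.cons b x)) (Nat.le_of_succ_le_succ h) y := by
  simp only [prefMarg, Finset.sum_filter]
  rw [sum_univ_fin_cons]
  simp [Fin.forall_fin_succ, ite_and]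

theorem snoc_eq_cons_of_fin_zero {α : Type*} (y : Fin 0 → α) (c : α) :
    (Fin.snoc y c : Fin 1 → α) = Fin.cons c y :=
  funext fun j => by rw [Fin.fin_one_eq_zero j]; rfl

section Glue

variable {n : ℕ} {ε : ℝ}

def glue (p : Bool → ℝ) (Q : Bool → (Fin n → Bool) → ℝ) (x : Fin (n + 1) → Bool) : ℝ :=
  p (x 0) * Q (x 0) (Fin.tail x)

@[simp]
theorem glue_cons (p : Bool → ℝ) (Q : Bool → (Fin n → Bool) → ℝ) (b : Bool) (x : Fin n → Bool) :
    glue p Q (Fin.cons b x) = p b * Q b x := by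
  simp [glue]

theorem prefMarg_glue_cons (p : Bool → ℝ) (Q : Bool → (Fin n → Bool) → ℝ) {i : ℕ}
    (h : i + 1 ≤ n + 1) (b : Bool) (y : Fin i → Bool) :
    prefMarg (glue p Q) h (Fin.cons b y) = p b * prefMarg (Q b) (Nat.le_of_succ_le_succ h) y := by
  rw [prefMarg_cons]
  simp [prefMarg, Finset.mul_sum]

theorem sum_glue (p : Bool → ℝ) {Q : Bool → (Fin n → Bool) → ℝ} (hQ : ∀ b, ∑ x, Q b x = 1) :
    ∑ x, glue p Q x = p false + p true := by
  simp [sum_univ_fin_cons, ← Finset.mul_sum, hQ, add_comm]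

theorem isSV_glue (hε : ε ≤ 1/2) {p : Bool → ℝ} {Q : Bool → (Fin n → Bool) → ℝ}
    (hp : ∀ b, p b ∈ Set.Icc (1/2 - ε) (1/2 + ε)) (hp1 : p false + p true = 1)
    (hQ : ∀ b, IsSV n ε (Q b)) : IsSV (n + 1) ε (glue p Q) := by
  have hp0 : ∀ b, 0 ≤ p b := fun b => by linarith [(hp b).1]
  have hsum : ∑ x, glue p Q x = 1 := by rw [sum_glue p fun b => (hQ b).2.1, hp1]
  refine ⟨fun x => mul_nonneg (hp0 _) ((hQ _).1 _), hsum, ?_⟩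
  rintro (_ | i) hi y hpos c
  · have hc : prefMarg (glue p Q) hi (Fin.snoc y c) = p c := by
      rw [snoc_eq_cons_of_fin_zero, prefMarg_glue_cons, prefMarg_zero, (hQ c).2.1, mul_one]
    simpa [prefMarg_zero, hsum, hc] using hp c
  · induction y using Fin.consCases with
    | cons a y =>
      rw [prefMarg_glue_cons] at hpos
      rw [← Fin.cons_snoc_eq_snoc_cons, prefMarg_glue_cons, prefMarg_glue_cons]
      have hy : 0 < prefMarg (Q a) _ y := pos_of_mul_pos_right hpos (hp0 a)
      rw [mul_div_mul_left _ _ (pos_of_mul_pos_left hpos hy.le).ne']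
      exact (hQ a).2.2 i _ y hy c

end Glue

section Bernoulli

variable {n : ℕ} {ε : ℝ}

noncomputable def bernBit (ε : ℝ) (b : Bool) : ℝ := if b then 1/2 - ε else 1/2 + ε

theorem bern_zero (x : Fin 0 → Bool) : bern 0 ε x = 1 := by
  simp [bern, hammingWeight]

theorem hammingWeight_cons (b : Bool) (x : Fin n → Bool) :
    hammingWeight (Fin.cons b x : Fin (n + 1) → Bool) = b.toNat + hammingWeight x := by
  simp only [hammingWeight, Finset.card_filter, Fin.sum_univ_succ, Fin.cons_zero, Fin.cons_succ]
  cases b <;> rfl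

theorem bern_succ : bern (n + 1) ε = glue (bernBit ε) fun _ => bern n ε := by
  funext x
  induction x using Fin.consCases with
  | cons b x =>
    have hw : hammingWeight x ≤ n := (Finset.card_filter_le _ _).trans_eq (Finset.card_fin n)
    rw [glue_cons, bern, bern, hammingWeight_cons]
    cases b
    · rw [Bool.toNat_false, zero_add, Nat.succ_sub hw, pow_succ]
      simp [bernBit]; ring
    · rw [Bool.toNat_true, add_comm 1 (hammingWeight x), Nat.add_sub_add_right, pow_succ]
      simp [bernBit]; ring

theorem isSV_bern (hε0 : 0 ≤ ε) (hε : ε ≤ 1/2) : IsSV n ε (bern n ε) := by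
  induction n with
  | zero =>
    exact ⟨fun x => by simp [bern_zero], by simp [bern_zero], fun i hi => absurd hi i.not_lt_zero⟩
  | succ n ih =>
    rw [bern_succ]
    refine isSV_glue hε (fun b => ?_) (by norm_num [bernBit]) fun _ => ih
    cases b <;> constructor <;> simp [bernBit] <;> linarith

end Bernoulli

section Decomposition

variable {n : ℕ} {ε : ℝ} {P : (Fin (n + 1) → Bool) → ℝ}

def headMarg (P : (Fin (n + 1) → Bool) → ℝ) (b : Bool) : ℝ := ∑ x, P (Fin.cons b x)

/-- On a branch of probability zero the conditional law is replaced by `bern n ε`, only so that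
`tailCond P ε b` is an SV distribution for every `b`. -/
noncomputable def tailCond (P : (Fin (n + 1) → Bool) → ℝ) (ε : ℝ) (b : Bool) :
    (Fin n → Bool) → ℝ :=
  if 0 < headMarg P b then fun x => P (Fin.cons b x) / headMarg P b else bern n ε

theorem headMarg_false_add_true : headMarg P false + headMarg P true = ∑ x, P x := by
  simp [headMarg, sum_univ_fin_cons, add_comm]

theorem IsSV.headMarg_mem_Icc (hP : IsSV (n + 1) ε P) (b : Bool) :
    headMarg P b ∈ Set.Icc (1/2 - ε) (1/2 + ε) := by
  have htot : prefMarg P (Nat.zero_le _) Fin.elim0 = 1 := by rw [prefMarg_zero, hP.2.1]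
  have hb : prefMarg P (Nat.succ_pos n) (Fin.snoc Fin.elim0 b) = headMarg P b := by
    rw [snoc_eq_cons_of_fin_zero, prefMarg_cons, prefMarg_zero, headMarg]
  simpa [htot, hb] using hP.2.2 0 (Nat.succ_pos n) Fin.elim0 (by rw [htot]; exact one_pos) b

theorem glue_headMarg_tailCond (hP : ∀ x, 0 ≤ P x) : glue (headMarg P) (tailCond P ε) = P := by
  funext x
  induction x using Fin.consCases with
  | cons b x =>
    rw [glue_cons, tailCond]
    split_ifs with hb
    · exact mul_div_cancel₀ _ hb.ne'
    · have h0 : headMarg P b = 0 := le_antisymm (not_lt.1 hb) (Finset.sum_nonneg fun _ _ => hP _)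
      rw [h0, zero_mul, eq_comm]
      exact (Finset.sum_eq_zero_iff_of_nonneg fun _ _ => hP _).1 h0 x (Finset.mem_univ x)

theorem isSV_tailCond (hε0 : 0 ≤ ε) (hε : ε ≤ 1/2) (hP : IsSV (n + 1) ε P) (b : Bool) :
    IsSV n ε (tailCond P ε b) := by
  rw [tailCond]
  split_ifs with hb
  swap
  · exact isSV_bern hε0 hε
  have hmarg : ∀ {i} (h : i ≤ n) (y : Fin i → Bool),
      prefMarg (fun x => P (Fin.cons b x) / headMarg P b) h y
      = prefMarg P (Nat.succ_le_succ h) (Fin.cons b y) / headMarg P b := by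
    intro i h y
    rw [prefMarg_cons]
    simp [prefMarg, Finset.sum_div]
  refine ⟨fun x => div_nonneg (hP.1 _) hb.le, ?_, fun i hi y hpos c => ?_⟩
  · rw [← Finset.sum_div, div_eq_one_iff_eq hb.ne']
    rfl
  · rw [hmarg] at hpos
    rw [hmarg, hmarg, Fin.cons_snoc_eq_snoc_cons, div_div_div_cancel_right₀ hb.ne']
    exact hP.2.2 (i + 1) (Nat.succ_lt_succ hi) _ ((div_pos_iff_of_pos_right hb).1 hpos) c

end Decomposition

section Extreme

variable {n : ℕ} {ε : ℝ} {P : (Fin (n + 1) → Bool) → ℝ}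

theorem headMarg_false_mem_extremePoints (hε0 : 0 ≤ ε) (hε : ε ≤ 1/2)
    (hP : P ∈ (SVset (n + 1) ε).extremePoints ℝ) :
    headMarg P false ∈ (Set.Icc (1/2 - ε) (1/2 + ε)).extremePoints ℝ := by
  have hPsv : IsSV (n + 1) ε P := hP.1
  set Q := tailCond P ε
  let f := AffineMap.lineMap (k := ℝ) (glue (fun b => if b then 1 else 0) Q)
    (glue (fun b => if b then 0 else 1) Q)
  have hf : ∀ q, f q = glue (fun b => if b then 1 - q else q) Q := fun q => by
    funext x
    cases h : x 0 <;> simp [f, AffineMap.lineMap_apply_module, glue, h]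
  have hf_inj : Function.Injective f := by
    refine AffineMap.lineMap_injective ℝ fun h => ?_
    obtain ⟨x, -, hx⟩ := Finset.exists_ne_zero_of_sum_ne_zero
      (((isSV_tailCond hε0 hε hPsv false).2.1).trans_ne one_ne_zero)
    exact hx (by simpa [eq_comm] using congrFun h (Fin.cons false x))
  refine f.mem_extremePoints_of_mapsTo (t := SVset (n + 1) ε) hf_inj (fun q hq => ?_)
    (hPsv.headMarg_mem_Icc false) ?_
  · rw [hf]
    refine isSV_glue hε (fun b => ?_) (by simp) (isSV_tailCond hε0 hε hPsv)
    obtain ⟨hq₁, hq₂⟩ := hq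
    cases b <;> constructor <;> simp <;> linarith
  · have hhead : (fun b => if b then 1 - headMarg P false else headMarg P false) = headMarg P := by
      funext b
      cases b <;> simp [← hPsv.2.1, ← headMarg_false_add_true]
    rw [hf, hhead, glue_headMarg_tailCond hPsv.1]
    exact hP

theorem exists_perm_headMarg_eq_bernBit (hε0 : 0 ≤ ε) (hε : ε ≤ 1/2)
    (hP : P ∈ (SVset (n + 1) ε).extremePoints ℝ) :
    ∃ σ : Equiv.Perm Bool, ∀ b, headMarg P b = bernBit ε (σ b) := by
  have hsum : headMarg P true = 1 - headMarg P false := by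
    rw [← hP.1.2.1, ← headMarg_false_add_true]; ring
  have := headMarg_false_mem_extremePoints hε0 hε hP
  rw [Set.extremePoints_Icc (by linarith), Set.mem_insert_iff, Set.mem_singleton_iff] at this
  rcases this with h | h
  · refine ⟨Equiv.swap false true, fun b => ?_⟩
    cases b
    · simp [bernBit, h]
    · simp [bernBit, hsum, h]; ring
  · refine ⟨1, fun b => ?_⟩
    cases b
    · simp [bernBit, h]
    · simp [bernBit, hsum, h]; ring

theorem tailCond_mem_extremePoints (hε0 : 0 ≤ ε) (hε : ε ≤ 1/2)
    (hP : P ∈ (SVset (n + 1) ε).extremePoints ℝ) {b : Bool} (hb : 0 < headMarg P b) :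
    tailCond P ε b ∈ (SVset n ε).extremePoints ℝ := by
  have hPsv : IsSV (n + 1) ε P := hP.1
  set Q := tailCond P ε
  let L := (LinearMap.mulLeft ℝ
    (fun x => if x 0 = b then headMarg P b else 0 : (Fin (n + 1) → Bool) → ℝ)).comp
    (LinearMap.funLeft ℝ ℝ fun x : Fin (n + 1) → Bool => Fin.tail x)
  let f := L.toAffineMap + AffineMap.const ℝ _ (glue (headMarg P) (Function.update Q b 0))
  have hf : ∀ R, f R = glue (headMarg P) (Function.update Q b R) := fun R => by
    funext x
    induction x using Fin.consCases with
    | cons c x => by_cases hc : c = b <;> simp [f, L, hc]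
  have hf_inj : Function.Injective f := fun R R' h => by
    funext x
    simpa [hf, hb.ne'] using congrFun h (Fin.cons b x)
  refine f.mem_extremePoints_of_mapsTo (t := SVset (n + 1) ε) hf_inj (fun R hR => ?_)
    (isSV_tailCond hε0 hε hPsv b) ?_
  · rw [hf]
    refine isSV_glue hε hPsv.headMarg_mem_Icc (by rw [headMarg_false_add_true, hPsv.2.1])
      fun c => ?_
    by_cases hc : c = b
    · rw [hc, Function.update_self]; exact hR
    · simpa [hc] using isSV_tailCond hε0 hε hPsv c
  · rw [hf, Function.update_eq_self, glue_headMarg_tailCond hPsv.1]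
    exact hP

end Extreme

def consPerm {n : ℕ} {α : Type*} (σ : Equiv.Perm α) (τ : α → Equiv.Perm (Fin n → α)) :
    Equiv.Perm (Fin (n + 1) → α) :=
  (Fin.consEquiv fun _ => α).symm.trans ((σ.prodShear τ).trans (Fin.consEquiv fun _ => α))

@[simp]
theorem consPerm_cons {n : ℕ} {α : Type*} (σ : Equiv.Perm α) (τ : α → Equiv.Perm (Fin n → α))
    (a : α) (x : Fin n → α) : consPerm σ τ (Fin.cons a x) = Fin.cons (σ a) (τ a x) := by
  simp [consPerm, Fin.consEquiv]

/-- Proposition 1: every extreme point of the set of SV distributions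
with parameter ε is a permutation of the Bernoulli distribution with parameter
p₊ = 1/2 + ε. -/
theorem sv_extreme_points_are_permuted_bernoulli
    (n : ℕ) (ε : ℝ) (hε0 : 0 ≤ ε) (hε : ε ≤ 1/2)
    (P : (Fin n → Bool) → ℝ) (hP : P ∈ Set.extremePoints ℝ (SVset n ε)) :
    ∃ σ : Equiv.Perm (Fin n → Bool), ∀ x, P x = bern n ε (σ x) := by
  induction n with
  | zero => exact ⟨1, fun x => by rw [bern_zero, ← hP.1.2.1, Fintype.sum_subsingleton _ x]⟩
  | succ n ih =>
    obtain ⟨σ, hσ⟩ := exists_perm_headMarg_eq_bernBit hε0 hε hP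
    have hτ : ∀ b, ∃ τ : Equiv.Perm (Fin n → Bool), ∀ x, tailCond P ε b x = bern n ε (τ x) := by
      intro b
      by_cases hb : 0 < headMarg P b
      · exact ih _ (tailCond_mem_extremePoints hε0 hε hP hb)
      · exact ⟨1, fun x => by simp [tailCond, hb]⟩
    choose τ hτ using hτ
    refine ⟨consPerm σ τ, fun x => ?_⟩
    induction x using Fin.consCases with
    | cons b x =>
      rw [consPerm_cons, bern_succ, glue_cons, ← hσ, ← hτ, ← glue_cons,
        glue_headMarg_tailCond hP.1.1]
end

section
/- Fix n ∈ ℕ, ε ∈ (0, 1/2), and 1 ≤ K ≤ 2^n. Let B be the Bernoulli distribution with parameter p₊ = 1/2 + ε on {0,1}^n, write p₋ = 1/2 − ε, and let m be the smallest integer with ∑_{i=0}^{m} C(n,i) ≥ K. Then the K-th Ky Fan norm of B equals ‖B‖_K = ∑_{i=0}^{m−1} C(n,i) p₊^{n−i} p₋^{i} + (K − ∑_{i=0}^{m−1} C(n,i)) · p₊^{n−m} p₋^{m}, where C(n,i) denotes the binomial coefficient. -/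
/-!
Under `B` the probability of a string is a decreasing function of its weight. Hence any
`K`-set `S` containing every string of weight `< m` and otherwise only strings of weight `m`
is separated from its complement by the threshold `c = p₊^(n-m) p₋^m` (values `≥ c` on `S`,
`≤ c` off `S`), and such a set maximizes the mass among `K`-sets: exchanging an element outside
`S` for one inside never decreases the sum. Its mass is read off by counting the `C(n,i)`
strings of each weight.
-/

open Finset

theorem sum_le_sum_of_card_eq_of_threshold {Z : Type*} [DecidableEq Z] {Q : Z → ℝ}
    {S T : Finset Z} {c : ℝ} (hS : ∀ x ∈ S, c ≤ Q x) (hSc : ∀ y ∉ S, Q y ≤ c)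
    (hTS : #T = #S) : ∑ y ∈ T, Q y ≤ ∑ x ∈ S, Q x :=
  calc ∑ y ∈ T, Q y
      ≤ ∑ y ∈ T ∩ S, Q y + #(T \ S) • c := by
        rw [← sum_inter_add_sum_sdiff T S]
        gcongr
        exact sum_le_card_nsmul _ _ _ fun y hy => hSc y (mem_sdiff.1 hy).2
    _ = ∑ x ∈ S ∩ T, Q x + #(S \ T) • c := by rw [inter_comm, card_sdiff_comm hTS]
    _ ≤ ∑ x ∈ S, Q x := by
        rw [← sum_inter_add_sum_sdiff S T]
        gcongr
        exact card_nsmul_le_sum _ _ _ fun x hx => hS x (mem_sdiff.1 hx).1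

theorem kyFan_card_eq_sum_of_threshold {Z : Type*} [Fintype Z] [DecidableEq Z] {Q : Z → ℝ}
    {S : Finset Z} (c : ℝ) (hS : ∀ x ∈ S, c ≤ Q x) (hSc : ∀ y ∉ S, Q y ≤ c) :
    kyFan #S Q = ∑ x ∈ S, Q x :=
  IsGreatest.csSup_eq ⟨⟨S, rfl, rfl⟩, by
    rintro _ ⟨T, hT, rfl⟩
    exact sum_le_sum_of_card_eq_of_threshold hS hSc hT⟩

theorem sum_comp_eq_of_filter_lt_subset {Z : Type*} [Fintype Z] [DecidableEq Z] {r : Z → ℕ}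
    {m : ℕ} {S : Finset Z} (hAS : ({x | r x < m} : Finset Z) ⊆ S)
    (hS : S ⊆ ({x | r x < m + 1} : Finset Z)) (g : ℕ → ℝ) :
    ∑ x ∈ S, g (r x) = ∑ x with r x < m, g (r x) + ((#S : ℝ) - #{x | r x < m}) * g m := by
  have hlevel : ∀ x ∈ S \ ({x | r x < m} : Finset Z), g (r x) = g m := fun x hx => by
    obtain ⟨hxS, hxA⟩ := mem_sdiff.1 hx
    have hlt := (mem_filter.1 (hS hxS)).2
    have hge : ¬r x < m := fun h => hxA (mem_filter.2 ⟨mem_univ x, h⟩)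
    rw [show r x = m by omega]
  rw [← sum_sdiff hAS, sum_eq_card_nsmul hlevel, card_sdiff_of_subset hAS, nsmul_eq_mul,
    Nat.cast_sub (card_le_card hAS), add_comm]

theorem pow_sub_mul_pow_le_of_le {R : Type*} [CommSemiring R] [PartialOrder R] [IsOrderedRing R]
    {p q : R} (hq : 0 ≤ q) (hqp : q ≤ p) {n a b : ℕ} (hab : a ≤ b) (hbn : b ≤ n) :
    p ^ (n - b) * q ^ b ≤ p ^ (n - a) * q ^ a := by
  have hp : 0 ≤ p := hq.trans hqp
  calc p ^ (n - b) * q ^ b = p ^ (n - b) * q ^ (b - a) * q ^ a := by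
        rw [mul_assoc, ← pow_add, Nat.sub_add_cancel hab]
    _ ≤ p ^ (n - b) * p ^ (b - a) * q ^ a := by gcongr
    _ = p ^ (n - a) * q ^ a := by rw [← pow_add]; congr 2; omega

theorem hammingWeight_le {n : ℕ} (x : Fin n → Bool) : hammingWeight x ≤ n :=
  (card_filter_le _ _).trans_eq (card_fin n)

theorem card_hammingWeight_eq (n i : ℕ) :
    #{x : Fin n → Bool | hammingWeight x = i} = n.choose i := by
  rw [show n.choose i = #(powersetCard i (univ : Finset (Fin n))) by simp]
  refine card_nbij' (fun x => ({j | x j} : Finset (Fin n))) (fun s j => decide (j ∈ s))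
    ?_ ?_ ?_ ?_
  · intro x hx
    rw [mem_coe, mem_filter] at hx
    rw [mem_coe, mem_powersetCard]
    exact ⟨subset_univ _, hx.2⟩
  · intro s hs
    rw [mem_coe, mem_powersetCard] at hs
    rw [mem_coe, mem_filter]
    simpa [hammingWeight, filter_mem_eq_inter] using hs.2
  · intro x _
    funext j
    simp
  · intro s _
    ext j
    simp

theorem sum_hammingWeight_lt {M : Type*} [AddCommMonoid M] (n m : ℕ) (g : ℕ → M) :
    ∑ x : Fin n → Bool with hammingWeight x < m, g (hammingWeight x)
      = ∑ i ∈ range m, n.choose i • g i := by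
  rw [← sum_fiberwise_of_maps_to (g := hammingWeight) (t := range m) (by simp)]
  refine sum_congr rfl fun i hi => ?_
  have hfiber : ({x | hammingWeight x < m ∧ hammingWeight x = i} : Finset (Fin n → Bool))
      = ({x | hammingWeight x = i} : Finset (Fin n → Bool)) :=
    filter_congr fun x _ => ⟨And.right, fun h => ⟨h ▸ mem_range.1 hi, h⟩⟩
  rw [filter_filter, hfiber, sum_congr rfl fun x hx => by rw [(mem_filter.1 hx).2], sum_const,
    card_hammingWeight_eq]

theorem card_hammingWeight_lt (n m : ℕ) :
    #{x : Fin n → Bool | hammingWeight x < m} = ∑ i ∈ range m, n.choose i := by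
  rw [card_eq_sum_ones, sum_hammingWeight_lt n m fun _ => 1]
  simp

theorem kyFan_bernoulli_eq_general
    (n : ℕ) (ε : ℝ) (hε0 : 0 < ε) (hε : ε < 1/2)
    (K : ℕ) (hK2 : K ≤ 2 ^ n)
    (m : ℕ) (hm : K ≤ ∑ i ∈ Finset.range (m + 1), n.choose i)
    (hmin : ∀ m' < m, ∑ i ∈ Finset.range (m' + 1), n.choose i < K) :
    kyFan K (bern n ε) =
      (∑ i ∈ Finset.range m,
        (n.choose i : ℝ) * (1/2 + ε) ^ (n - i) * (1/2 - ε) ^ i) +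
      ((K : ℝ) - ∑ i ∈ Finset.range m, (n.choose i : ℝ)) *
        ((1/2 + ε) ^ (n - m) * (1/2 - ε) ^ m) := by
  have hmn : m ≤ n := by
    by_contra! h
    have := hmin n h
    rw [Nat.sum_range_choose] at this
    omega
  have hlow : ∑ i ∈ range m, n.choose i ≤ K := by
    cases m with
    | zero => simp
    | succ k => exact (hmin k k.lt_succ_self).le
  obtain ⟨S, hbelow, habove, rfl⟩ := exists_subsuperset_card_eq
    (monotone_filter_right _ fun _ _ => Nat.lt_succ_of_lt)
    ((card_hammingWeight_lt n m).trans_le hlow)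
    (hm.trans_eq (card_hammingWeight_lt n (m + 1)).symm)
  set g : ℕ → ℝ := fun i => (1/2 + ε) ^ (n - i) * (1/2 - ε) ^ i
  have hg {a b : ℕ} (hab : a ≤ b) (hbn : b ≤ n) : g b ≤ g a :=
    pow_sub_mul_pow_le_of_le (by linarith) (by linarith) hab hbn
  have hbern : bern n ε = fun x => g (hammingWeight x) := rfl
  rw [hbern, kyFan_card_eq_sum_of_threshold (g m)
    (fun x hx => hg (Nat.lt_succ_iff.1 (mem_filter.1 (habove hx)).2) hmn)
    (fun y hy => hg (not_lt.1 fun h => hy (hbelow (mem_filter.2 ⟨mem_univ y, h⟩)))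
      (hammingWeight_le y)),
    sum_comp_eq_of_filter_lt_subset hbelow habove g, sum_hammingWeight_lt, card_hammingWeight_lt]
  push_cast [g, nsmul_eq_mul, mul_assoc]
  rfl

/-- exact formula for the K-th Ky Fan norm of the Bernoulli
distribution, where m is the smallest integer with ∑_{i=0}^m C(n,i) ≥ K. -/
theorem kyFan_bernoulli_eq
    (n : ℕ) (ε : ℝ) (hε0 : 0 < ε) (hε : ε < 1/2)
    (K : ℕ) (hK1 : 1 ≤ K) (hK2 : K ≤ 2 ^ n)
    (m : ℕ) (hm : K ≤ ∑ i ∈ Finset.range (m + 1), n.choose i)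
    (hmin : ∀ m' < m, ∑ i ∈ Finset.range (m' + 1), n.choose i < K) :
    kyFan K (bern n ε) =
      (∑ i ∈ Finset.range m,
        (n.choose i : ℝ) * (1/2 + ε) ^ (n - i) * (1/2 - ε) ^ i) +
      ((K : ℝ) - ∑ i ∈ Finset.range m, (n.choose i : ℝ)) *
        ((1/2 + ε) ^ (n - m) * (1/2 - ε) ^ m) :=
  kyFan_bernoulli_eq_general n ε hε0 hε K hK2 m hm hmin
end

section
/- Fix n ∈ ℕ, ε ∈ [0, 1/2), 1 ≤ K ≤ 2^n, and m ≤ n. Write p₊ = 1/2 + ε and p₋ = 1/2 − ε, and let B be the Bernoulli distribution with parameter p₊ on {0,1}^n. If ∑_{i=0}^{m} C(n,i) ≤ K, then the K-th Ky Fan norm of B satisfies ‖B‖_K ≥ ∑_{i=0}^{m} C(n,i) p₋^{i} p₊^{n−i} ≥ C(n,m) p₋^{m} p₊^{n−m}, where C(n,i) denotes the binomial coefficient. -/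
open Finset

/-!
The strings of Hamming weight at most `m` are `∑_{i ≤ m} C(n,i) ≤ K` many, and `B` takes the
value `p₋^i p₊^(n-i)` on each of the `C(n,i)` strings of weight `i`. Padding this set with
arbitrary further strings up to cardinality `K` only adds nonnegative mass, so its total
`B`-mass is a lower bound for `‖B‖_K`; the second inequality just keeps the top term of the sum.
-/

theorem sum_le_kyFan {Z : Type*} [Fintype Z] {Q : Z → ℝ} (hQ : 0 ≤ Q) {K : ℕ}
    (hK : K ≤ Fintype.card Z) {S : Finset Z} (hS : #S ≤ K) :
    ∑ z ∈ S, Q z ≤ kyFan K Q := by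
  obtain ⟨T, hST, -, hT⟩ := exists_subsuperset_card_eq (subset_univ S) hS (by rwa [card_univ])
  calc ∑ z ∈ S, Q z ≤ ∑ z ∈ T, Q z := sum_le_sum_of_subset_of_nonneg hST fun z _ _ => hQ z
    _ ≤ kyFan K Q := le_csSup ((Set.toFinite _).image _).bddAbove ⟨T, hT, rfl⟩

theorem sum_hammingWeight_le_comp {M : Type*} [AddCommMonoid M] (n m : ℕ) (f : ℕ → M) :
    ∑ x : Fin n → Bool with hammingWeight x ≤ m, f (hammingWeight x) =
      ∑ i ∈ range (m + 1), n.choose i • f i := by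
  rw [← sum_fiberwise_of_maps_to (g := hammingWeight) (t := range (m + 1))
    fun x hx => by simpa [Nat.lt_succ_iff] using hx]
  refine sum_congr rfl fun i hi => ?_
  have hfiber : ((univ.filter fun x : Fin n → Bool => hammingWeight x ≤ m).filter
      fun x => hammingWeight x = i) = univ.filter fun x => hammingWeight x = i := by
    ext x
    simp only [mem_filter, mem_univ, true_and, and_iff_right_iff_imp]
    rintro rfl
    exact Nat.lt_succ_iff.mp (mem_range.mp hi)
  rw [hfiber, sum_congr rfl fun x hx => congrArg f (mem_filter.mp hx).2, sum_const,
    card_hammingWeight_eq]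

theorem sum_bern_hammingWeight_le (n m : ℕ) (ε : ℝ) :
    ∑ x : Fin n → Bool with hammingWeight x ≤ m, bern n ε x =
      ∑ i ∈ range (m + 1), (n.choose i : ℝ) * (1/2 - ε) ^ i * (1/2 + ε) ^ (n - i) := by
  unfold bern
  rw [sum_hammingWeight_le_comp n m fun i => (1/2 + ε) ^ (n - i) * (1/2 - ε) ^ i]
  refine sum_congr rfl fun i _ => ?_
  rw [nsmul_eq_mul]
  ring

theorem kyFan_bernoulli_lower_bound_general
    (n : ℕ) (ε : ℝ) (hε0 : 0 ≤ ε) (hε : ε < 1/2)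
    (K : ℕ) (hK2 : K ≤ 2 ^ n) (m : ℕ)
    (hsum : ∑ i ∈ Finset.range (m + 1), n.choose i ≤ K) :
    (∑ i ∈ Finset.range (m + 1),
        (n.choose i : ℝ) * (1/2 - ε) ^ i * (1/2 + ε) ^ (n - i)) ≤ kyFan K (bern n ε) ∧
    (n.choose m : ℝ) * (1/2 - ε) ^ m * (1/2 + ε) ^ (n - m) ≤
      ∑ i ∈ Finset.range (m + 1),
        (n.choose i : ℝ) * (1/2 - ε) ^ i * (1/2 + ε) ^ (n - i) := by
  have hplus : (0 : ℝ) ≤ 1/2 + ε := by linarith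
  have hminus : (0 : ℝ) ≤ 1/2 - ε := by linarith
  constructor
  · have hcard : #{x : Fin n → Bool | hammingWeight x ≤ m} ≤ K := by
      simpa [card_eq_sum_ones, sum_hammingWeight_le_comp n m fun _ => 1] using hsum
    rw [← sum_bern_hammingWeight_le]
    exact sum_le_kyFan (fun x => by unfold bern; positivity) (by simpa using hK2) hcard
  · exact single_le_sum (f := fun i => (n.choose i : ℝ) * (1/2 - ε) ^ i * (1/2 + ε) ^ (n - i))
      (fun i _ => by positivity) (self_mem_range_succ m)

/-- lower bounds on the K-th Ky Fan norm of the Bernoulli distribution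
when ∑_{i=0}^m C(n,i) ≤ K. -/
theorem kyFan_bernoulli_lower_bound
    (n : ℕ) (ε : ℝ) (hε0 : 0 ≤ ε) (hε : ε < 1/2)
    (K : ℕ) (hK1 : 1 ≤ K) (hK2 : K ≤ 2 ^ n) (m : ℕ) (hmn : m ≤ n)
    (hsum : ∑ i ∈ Finset.range (m + 1), n.choose i ≤ K) :
    (∑ i ∈ Finset.range (m + 1),
        (n.choose i : ℝ) * (1/2 - ε) ^ i * (1/2 + ε) ^ (n - i)) ≤ kyFan K (bern n ε) ∧
    (n.choose m : ℝ) * (1/2 - ε) ^ m * (1/2 + ε) ^ (n - m) ≤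
      ∑ i ∈ Finset.range (m + 1),
        (n.choose i : ℝ) * (1/2 - ε) ^ i * (1/2 + ε) ^ (n - i) :=
  kyFan_bernoulli_lower_bound_general n ε hε0 hε K hK2 m hsum
end

section
/- Fix ε ∈ [0, 1/2). The sequence r ↦ 2^{r+1} · sin²(π/2^{r+2}) · ((1/2+ε)/(1/2−ε))^{2r} tends to 0 as r → ∞ if and only if ε < (√2 − 1)²/2. Equivalently, the condition ε < (√2 − 1)²/2 holds if and only if (1/2+ε)² < 2·(1/2−ε)². -/
open Filter

/-- the adversary bound 2^{r+1}·sin²(π/2^{r+2})·((1/2+ε)/(1/2−ε))^{2r}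
tends to 0 iff ε < (√2−1)²/2, which is equivalent to (1/2+ε)² < 2(1/2−ε)². -/
theorem chained_bell_threshold
    (ε : ℝ) (hε0 : 0 ≤ ε) (hε : ε < 1/2) :
    (Tendsto
        (fun r : ℕ => (2 : ℝ) ^ (r + 1) * Real.sin (Real.pi / 2 ^ (r + 2)) ^ 2 *
          ((1/2 + ε) / (1/2 - ε)) ^ (2 * r))
        atTop (nhds 0) ↔ ε < (Real.sqrt 2 - 1) ^ 2 / 2) ∧
    (ε < (Real.sqrt 2 - 1) ^ 2 / 2 ↔ (1/2 + ε) ^ 2 < 2 * (1/2 - ε) ^ 2) := by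
  have hm : (0:ℝ) < 1/2 - ε := by linarith
  have hp : (0:ℝ) < 1/2 + ε := by linarith
  have hs2 : Real.sqrt 2 ^ 2 = 2 := Real.sq_sqrt (by norm_num)
  have hsnn : (0:ℝ) ≤ Real.sqrt 2 := Real.sqrt_nonneg 2
  have hs1 : 1 < Real.sqrt 2 := by nlinarith
  have halg : ε < (Real.sqrt 2 - 1) ^ 2 / 2 ↔ (1/2 + ε) ^ 2 < 2 * (1/2 - ε) ^ 2 := by
    constructor <;> intro h <;> nlinarith [sq_nonneg (Real.sqrt 2 - 1 - 2*ε)]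
  set q : ℝ := (1/2 + ε) / (1/2 - ε) with hq
  have hq0 : 0 ≤ q := div_nonneg hp.le hm.le
  have hq2 : q ^ 2 = (1/2 + ε)^2 / (1/2 - ε)^2 := by rw [hq, div_pow]
  have hq2iff : q ^ 2 < 2 ↔ (1/2 + ε) ^ 2 < 2 * (1/2 - ε) ^ 2 := by
    rw [hq2, div_lt_iff₀ (by positivity)]
  have hkey : ∀ (y : ℝ) (r : ℕ), (2 : ℝ) ^ (r + 1) * (Real.pi / 2 ^ (r + 2)) ^ 2 * y ^ (2 * r)
      = Real.pi ^ 2 / 8 * (y ^ 2 / 2) ^ r := by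
    intro y r
    rw [div_pow, div_pow, ← pow_mul, pow_mul y]
    field_simp
    ring
  refine ⟨?_, halg⟩
  rw [halg]
  constructor
  · -- tendsto → q² < 2 (contrapositive)
    intro hT
    by_contra hcon
    push_neg at hcon
    have hq2ge : 2 ≤ q ^ 2 := by
      rw [hq2, le_div_iff₀ (by positivity)]; linarith
    -- lower bound: each term ≥ 1/2
    have hlb : ∀ r : ℕ, (1:ℝ)/2 ≤ (2 : ℝ) ^ (r + 1) * Real.sin (Real.pi / 2 ^ (r + 2)) ^ 2 *
        q ^ (2 * r) := by
      intro r
      have hx0 : (0:ℝ) < Real.pi / 2 ^ (r + 2) := by positivity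
      have hxle : Real.pi / 2 ^ (r + 2) ≤ Real.pi / 2 := by
        apply div_le_div_of_nonneg_left Real.pi_pos.le (by norm_num)
        calc (2:ℝ) ≤ 2 ^ 2 := by norm_num
        _ ≤ 2 ^ (r + 2) := pow_le_pow_right₀ (by norm_num) (by omega)
      have hsin : 2 / Real.pi * (Real.pi / 2 ^ (r + 2)) ≤ Real.sin (Real.pi / 2 ^ (r + 2)) :=
        Real.mul_le_sin hx0.le hxle
      have hval : 2 / Real.pi * (Real.pi / 2 ^ (r + 2)) = 1 / 2 ^ (r + 1) := by
        field_simp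
        ring
      rw [hval] at hsin
      have hsq : (1 / (2:ℝ) ^ (r + 1)) ^ 2 ≤ Real.sin (Real.pi / 2 ^ (r + 2)) ^ 2 := by
        apply pow_le_pow_left₀ (by positivity) hsin
      have hqpow : (2:ℝ) ^ r ≤ q ^ (2 * r) := by
        calc (2:ℝ) ^ r ≤ (q ^ 2) ^ r := pow_le_pow_left₀ (by norm_num) hq2ge r
        _ = q ^ (2 * r) := by rw [← pow_mul]
      calc (1:ℝ)/2 = (2:ℝ) ^ (r+1) * (1 / 2 ^ (r+1))^2 * 2 ^ r := by
            field_simp; ring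
      _ ≤ (2:ℝ) ^ (r + 1) * Real.sin (Real.pi / 2 ^ (r + 2)) ^ 2 * q ^ (2 * r) := by
            apply mul_le_mul (mul_le_mul_of_nonneg_left hsq (by positivity)) hqpow
              (by positivity) (by positivity)
    obtain ⟨N, hN⟩ := (hT.eventually (eventually_lt_nhds (by norm_num : (0:ℝ) < 1/2))).exists
    exact absurd hN (not_lt.mpr (hlb N))
  · -- q² < 2 → tendsto
    intro hlt2
    have hq2lt : q ^ 2 < 2 := hq2iff.mpr hlt2
    have hub : ∀ r : ℕ, (2 : ℝ) ^ (r + 1) * Real.sin (Real.pi / 2 ^ (r + 2)) ^ 2 *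
        q ^ (2 * r) ≤ Real.pi ^ 2 / 8 * (q ^ 2 / 2) ^ r := by
      intro r
      have hx0 : (0:ℝ) < Real.pi / 2 ^ (r + 2) := by positivity
      have hsin : Real.sin (Real.pi / 2 ^ (r + 2)) ≤ Real.pi / 2 ^ (r + 2) :=
        (Real.sin_lt hx0).le
      have hsin0 : 0 ≤ Real.sin (Real.pi / 2 ^ (r + 2)) := by
        apply Real.sin_nonneg_of_nonneg_of_le_pi hx0.le
        exact div_le_self Real.pi_pos.le (one_le_pow₀ (by norm_num))
      have hsq : Real.sin (Real.pi / 2 ^ (r + 2)) ^ 2 ≤ (Real.pi / 2 ^ (r + 2)) ^ 2 :=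
        pow_le_pow_left₀ hsin0 hsin 2
      calc (2 : ℝ) ^ (r + 1) * Real.sin (Real.pi / 2 ^ (r + 2)) ^ 2 * q ^ (2 * r)
          ≤ (2 : ℝ) ^ (r + 1) * (Real.pi / 2 ^ (r + 2)) ^ 2 * q ^ (2 * r) := by
            have h1 : (0:ℝ) ≤ (2 : ℝ) ^ (r + 1) := by positivity
            have h2 : (0:ℝ) ≤ q ^ (2 * r) := by positivity
            nlinarith [mul_le_mul_of_nonneg_left hsq h1]
      _ = Real.pi ^ 2 / 8 * (q ^ 2 / 2) ^ r := hkey q r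
    have hg : Tendsto (fun r : ℕ => Real.pi ^ 2 / 8 * (q ^ 2 / 2) ^ r) atTop (nhds 0) := by
      have : Tendsto (fun r : ℕ => (q ^ 2 / 2) ^ r) atTop (nhds 0) :=
        tendsto_pow_atTop_nhds_zero_of_lt_one (by positivity) (by linarith)
      simpa using this.const_mul (Real.pi ^ 2 / 8)
    exact squeeze_zero (fun r => by positivity) hub hg
end
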